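/- The 5×5 real matrix M = [[-4,2,0,0,0],[-2,-2,√6,0,0],[0,-√6,0,√6,0],[0,0,-√6,2,2],[0,0,0,-2,4]] is nilpotent of index exactly 5, i.e. M⁵ = 0 and M⁴ ≠ 0. -/

import Mathlib

/-!
`M3 ^ 4` has rank one, `M3 ^ 4 = u wᵀ`, and `w` is a left null vector of `M3`; hence
`M3 ^ 5 = u (wᵀ M3) = 0`, while `M3 ^ 4 ≠ 0` because `u` and `w` are nonzero.
-/

open Matrix Real

noncomputable def M3 : Matrix (Fin 5) (Fin 5) ℝ :=
  !![-4, 2, 0, 0, 0;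
     -2, -2, Real.sqrt 6, 0, 0;
     0, -Real.sqrt 6, 0, Real.sqrt 6, 0;
     0, 0, -Real.sqrt 6, 2, 2;
     0, 0, 0, -2, 4]

theorem Matrix.pow_succ_eq_zero_of_pow_eq_vecMulVec {n α : Type*} [Fintype n] [DecidableEq n]
    [Semiring α] {A : Matrix n n α} {k : ℕ} {u w : n → α} (hA : A ^ k = vecMulVec u w)
    (hw : w ᵥ* A = 0) : A ^ (k + 1) = 0 := by
  rw [pow_succ, hA, vecMulVec_mul, hw, vecMulVec_zero]

namespace M3

noncomputable def colVec : Fin 5 → ℝ := ![24, 48, 24 * √6, 48, 24]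

noncomputable def leftNullVec : Fin 5 → ℝ := ![1, -2, √6, -2, 1]

theorem sq_eq : M3 ^ 2 =
    !![12, -12, 2 * √6, 0, 0;
       12, -6, -2 * √6, 6, 0;
       2 * √6, 2 * √6, -12, 2 * √6, 2 * √6;
       0, 6, -2 * √6, -6, 12;
       0, 0, 2 * √6, -12, 12] := by
  ext i j
  fin_cases i <;> fin_cases j <;> simp [M3, sq, mul_apply, Fin.sum_univ_five] <;> ring_nf

theorem pow_four_eq : M3 ^ 4 = vecMulVec colVec leftNullVec := by
  rw [show 4 = 2 * 2 from rfl, pow_mul, sq_eq]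
  ext i j
  fin_cases i <;> fin_cases j <;>
    simp [sq, colVec, leftNullVec, vecMulVec_apply, mul_apply, Fin.sum_univ_five] <;>
    ring_nf <;> norm_num

theorem leftNullVec_vecMul : leftNullVec ᵥ* M3 = 0 := by
  ext j
  fin_cases j <;> simp [M3, leftNullVec, vecMul, dotProduct, Fin.sum_univ_five] <;> ring_nf

end M3

theorem stmt_3 : M3 ^ 5 = 0 ∧ M3 ^ 4 ≠ 0 := by
  refine ⟨pow_succ_eq_zero_of_pow_eq_vecMulVec M3.pow_four_eq M3.leftNullVec_vecMul, ?_⟩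
  rw [M3.pow_four_eq]
  refine vecMulVec_ne_zero (fun h => ?_) (fun h => ?_)
  · simpa [M3.colVec] using congrFun h 0
  · simpa [M3.leftNullVec] using congrFun h 0
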